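/- Quantum sublayer correction formula: let G be a hybrid network realizing a classical network H with quantum sublayer K (V(K) ⊆ V(H), sharing node set V_K = V(K)). Then QR_G(ζ) = R_H((p_e)) + Σ_{γ ≠ t, γ'} β_{γ,γ'} QR_{K/γ}(ζ_K) R_{H/γ'}((p_e)), i.e. the γ = t (trivial partition) terms of the hybrid splitting sum to exactly the classical reliability R_H. -/

import Mathlib

open scoped Classical
noncomputable section

/-- A finite set has finitely many setoids (partitions). -/
instance setoidFinite (U : Type) [Finite U] : Finite (Setoid U) :=
  Finite.of_injective (fun s => s.r)
    (fun _ _ h => Setoid.ext fun x y => iff_of_eq (congrFun (congrFun h x) y))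

noncomputable instance setoidFintype (U : Type) [Finite U] : Fintype (Setoid U) :=
  Fintype.ofFinite _

/-- Adjacency via an operating edge of the state `ε`. -/
def edgeAdj {V E : Type} (s t : E → V) (ε : E → Bool) (x y : V) : Prop :=
  ∃ e, ε e = true ∧ ((s e = x ∧ t e = y) ∨ (s e = y ∧ t e = x))

/-- Connectivity of the spanning subgraph determined by `ε`, on the vertex set `S`,
after further identifying vertices via the relation `σ`. -/
def ConnectedModOn {V E : Type} (S : Set V) (s t : E → V) (σ : V → V → Prop)
    (ε : E → Bool) : Prop :=
  ∀ x ∈ S, ∀ y ∈ S, Relation.EqvGen (fun a b => edgeAdj s t ε a b ∨ σ a b) x y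

/-- A state is connected if the spanning subgraph of operating edges is connected. -/
def ConnectedState {V E : Type} (S : Set V) (s t : E → V) (ε : E → Bool) : Prop :=
  ConnectedModOn S s t (fun _ _ => False) ε

/-- The identification relation on vertices induced by a partition (setoid) `γ` of `U`. -/
def partRel {V : Type} (U : Set V) (γ : Setoid ↥U) : V → V → Prop :=
  fun a b => ∃ (ha : a ∈ U) (hb : b ∈ U), γ.r ⟨a, ha⟩ ⟨b, hb⟩

/-- The state `ε` has no islands: every vertex of `S` is joined to some vertex of `U`. -/
def NoIslands {V E : Type} (S U : Set V) (s t : E → V) (ε : E → Bool) : Prop :=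
  ∀ x ∈ S, ∃ u ∈ U, Relation.EqvGen (edgeAdj s t ε) x u

/-- The partition `P(ε)` of `U` induced by the connected components of the state `ε`. -/
def inducedPart {V E : Type} (U : Set V) (s t : E → V) (ε : E → Bool) : Setoid ↥U :=
  ⟨fun u u' => Relation.EqvGen (edgeAdj s t ε) u.1 u'.1,
    ⟨fun u => Relation.EqvGen.refl u.1,
     fun h => Relation.EqvGen.symm _ _ h,
     fun h h' => Relation.EqvGen.trans _ _ _ h h'⟩⟩

/-- Probability of the classical state `ε` given Bernoulli parameters `p`. -/
def stProb {E : Type} [Fintype E] (p : E → ℝ) (ε : E → Bool) : ℝ :=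
  ∏ e, if ε e then p e else 1 - p e

/-- Reliability: probability that the random state satisfies the connectivity
predicate `Conn`. -/
def relOf {E : Type} [Fintype E] (p : E → ℝ) (Conn : (E → Bool) → Prop) : ℝ :=
  ∑ ε : E → Bool, if Conn ε then stProb p ε else 0

/-- The hermitian inner product of `ℓ²_ℂ(Λ)`, antilinear in the first argument. -/
def qdot {Λ : Type} [Fintype Λ] (x y : Λ → ℂ) : ℂ :=
  ∑ ε, (starRingEnd ℂ) (x ε) * y ε

/-- The orthogonal projection of `ℓ²_ℂ(Λ)` onto the span of `{|ε⟩ : ε ∈ C}`. -/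
def projC {Λ : Type} [Fintype Λ] (C : Set Λ) : (Λ → ℂ) →ₗ[ℂ] (Λ → ℂ) where
  toFun ψ := fun ε => if ε ∈ C then ψ ε else 0
  map_add' x y := by funext ε; by_cases h : ε ∈ C <;> simp [h]
  map_smul' c x := by funext ε; by_cases h : ε ∈ C <;> simp [h]

/-- Tensor product of operators under `ℓ²(Λ₁ × Λ₂) ≅ ℓ²(Λ₁) ⊗ ℓ²(Λ₂)`. -/
def tensorOp {A B : Type} [Fintype A] [Fintype B]
    (F : (A → ℂ) →ₗ[ℂ] (A → ℂ)) (G : (B → ℂ) →ₗ[ℂ] (B → ℂ)) :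
    (A × B → ℂ) →ₗ[ℂ] (A × B → ℂ) where
  toFun ψ := fun q => ∑ x : A × B, ψ x *
    (F (fun a => if a = x.1 then 1 else 0) q.1 * G (fun b => if b = x.2 then 1 else 0) q.2)
  map_add' x y := by
    funext q
    simp [add_mul, Finset.sum_add_distrib]
  map_smul' c x := by
    funext q
    simp only [Pi.smul_apply, smul_eq_mul, RingHom.id_apply]
    rw [Finset.mul_sum]
    exact Finset.sum_congr rfl (fun x _ => by ring)

/-- Tensor product of state vectors. -/
def vtens {A B : Type} (ψ₁ : A → ℂ) (ψ₂ : B → ℂ) : A × B → ℂ :=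
  fun q => ψ₁ q.1 * ψ₂ q.2

/-- Entry of the connectivity matrix: `1` if the common coarsening of the two
partitions has a single block, `0` otherwise.  (In Mathlib's order on `Setoid U`,
the common coarsening is the join `γ ⊔ γ'`, and having a single block means `= ⊤`.) -/
def connMatrix (U : Type) [Finite U] : Matrix (Setoid U) (Setoid U) ℝ :=
  fun γ γ' => if γ ⊔ γ' = ⊤ then 1 else 0

/-! Contract each component of the sublayer `K` onto its vertices in `V_K`. A joint state
`(ε_K, ε_H)` connects `G` iff `ε_H` has no islands and the induced partitions satisfy
`P(ε_K) ⊔ P(ε_H) = ⊤`; likewise `K/γ` is connected iff `P(ε_K) ⊔ γ = ⊤`, and `H/γ'` iff `ε_H` has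
no islands and `P(ε_H) ⊔ γ' = ⊤`. Hence the connectivity indicator of `G` is the entry
`C_{P(ε_K), P(ε_H)} = (C β C)_{P(ε_K), P(ε_H)}` of the connectivity matrix, a bilinear combination
of `K`- and `H`-indicators; averaging over `|ψ_K|²` and the Bernoulli weights gives the hybrid
splitting formula. Its `γ = ⊤` row is `R_H`, because `K/⊤` is always connected and `C β = 1`
forces `β_{⊤, γ'} = δ_{⊥, γ'}`. -/

open Relation

section EquivalenceClosure

variable {V : Type} {r r' : V → V → Prop} {U : Set V} {γ : Setoid U}

theorem eqvGen_iff_of_mutual (h : ∀ a b, r a b → EqvGen r' a b) (h' : ∀ a b, r' a b → EqvGen r a b)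
    {x y : V} : EqvGen r x y ↔ EqvGen r' x y :=
  ⟨fun hxy => Setoid.eqvGen_le (s := EqvGen.setoid r') h hxy,
    fun hxy => Setoid.eqvGen_le (s := EqvGen.setoid r) h' hxy⟩

/-- The classes of `(EqvGen r)|_U ⊔ γ` met by the `r`-component of `x`; they are constant along
`EqvGen (r ⊔ γ)` and form a singleton on `U`. -/
def reachedClasses (r : V → V → Prop) (U : Set V) (γ : Setoid U) (x : V) :
    Set (Quotient ((EqvGen.setoid r).comap ((↑) : U → V) ⊔ γ)) :=
  {q | ∃ u : U, EqvGen r x u ∧ Quotient.mk _ u = q}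

theorem reachedClasses_coe (u : U) :
    reachedClasses r U γ u = {Quotient.mk _ u} := by
  ext q
  constructor
  · rintro ⟨u', hu', rfl⟩
    exact Quotient.sound (le_sup_left (a := (EqvGen.setoid r).comap ((↑) : U → V)) (b := γ)
      (EqvGen.symm _ _ hu'))
  · rintro rfl
    exact ⟨u, EqvGen.refl _, rfl⟩

theorem reachedClasses_eq_of_eqvGen {x y : V}
    (h : EqvGen (fun a b => r a b ∨ partRel U γ a b) x y) :
    reachedClasses r U γ x = reachedClasses r U γ y := by
  refine Setoid.eqvGen_le (s := Setoid.ker (reachedClasses r U γ)) (fun a b hab => ?_) h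
  rcases hab with hab | ⟨ha, hb, hγ⟩
  · ext q
    exact exists_congr fun u => and_congr_left'
      ⟨fun hau => EqvGen.trans _ _ _ (EqvGen.symm _ _ (EqvGen.rel _ _ hab)) hau,
        fun hbu => EqvGen.trans _ _ _ (EqvGen.rel _ _ hab) hbu⟩
  · show reachedClasses r U γ (⟨a, ha⟩ : U) = reachedClasses r U γ (⟨b, hb⟩ : U)
    rw [reachedClasses_coe, reachedClasses_coe,
      Quotient.sound (le_sup_right (a := (EqvGen.setoid r).comap ((↑) : U → V)) hγ)]

theorem sup_comap_eqvGen :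
    (EqvGen.setoid r).comap ((↑) : U → V) ⊔ γ =
      (EqvGen.setoid fun a b => r a b ∨ partRel U γ a b).comap ((↑) : U → V) := by
  refine le_antisymm (sup_le ?_ ?_) ?_
  · exact fun u u' h => Setoid.eqvGen_mono (fun _ _ => Or.inl) h
  · exact fun u u' h => EqvGen.rel _ _ (Or.inr ⟨u.2, u'.2, h⟩)
  · intro u u' h
    have hreach := reachedClasses_eq_of_eqvGen h
    rw [reachedClasses_coe, reachedClasses_coe, Set.singleton_eq_singleton_iff] at hreach
    exact Quotient.exact hreach

theorem exists_eqvGen_of_eqvGen_sup {x u : V} (hu : u ∈ U)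
    (h : EqvGen (fun a b => r a b ∨ partRel U γ a b) x u) : ∃ u' ∈ U, EqvGen r x u' := by
  have hmem : Quotient.mk _ (⟨u, hu⟩ : U) ∈ reachedClasses r U γ x := by
    rw [reachedClasses_eq_of_eqvGen h]
    exact (reachedClasses_coe ⟨u, hu⟩).symm ▸ rfl
  obtain ⟨u', hu', -⟩ := hmem
  exact ⟨u', u'.2, hu'⟩

end EquivalenceClosure

section Connectivity

variable {V E : Type} {S U : Set V} {s t : E → V} {ε : E → Bool}

theorem connectedModOn_partRel_iff (hUS : U ⊆ S) (hU : U.Nonempty) (γ : Setoid U) :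
    ConnectedModOn S s t (partRel U γ) ε ↔
      NoIslands S U s t ε ∧ inducedPart U s t ε ⊔ γ = ⊤ := by
  change _ ↔ _ ∧ (EqvGen.setoid (edgeAdj s t ε)).comap ((↑) : U → V) ⊔ γ = ⊤
  rw [sup_comap_eqvGen, Setoid.eq_top_iff]
  constructor
  · intro h
    obtain ⟨u₀, hu₀⟩ := hU
    exact ⟨fun x hx => exists_eqvGen_of_eqvGen_sup hu₀ (h x hx u₀ (hUS hu₀)),
      fun u u' => h u (hUS u.2) u' (hUS u'.2)⟩
  · rintro ⟨hNI, htop⟩ x hx y hy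
    obtain ⟨u, hu, hxu⟩ := hNI x hx
    obtain ⟨u', hu', hyu'⟩ := hNI y hy
    have lift := Setoid.eqvGen_mono (r := edgeAdj s t ε)
      (s := fun a b => edgeAdj s t ε a b ∨ partRel U γ a b) (fun _ _ => Or.inl)
    exact EqvGen.trans _ _ _ (lift hxu)
      (EqvGen.trans _ _ _ (htop ⟨u, hu⟩ ⟨u', hu'⟩) (EqvGen.symm _ _ (lift hyu')))

theorem connectedModOn_partRel_self_iff (hU : U.Nonempty) (γ : Setoid U) :
    ConnectedModOn U s t (partRel U γ) ε ↔ inducedPart U s t ε ⊔ γ = ⊤ :=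
  (connectedModOn_partRel_iff subset_rfl hU γ).trans
    (and_iff_right fun x hx => ⟨x, hx, EqvGen.refl x⟩)

theorem connectedModOn_partRel_top : ConnectedModOn U s t (partRel U ⊤) ε :=
  fun _ hx _ hy => EqvGen.rel _ _ (Or.inr ⟨hx, hy, trivial⟩)

theorem connectedModOn_partRel_bot_iff :
    ConnectedModOn S s t (partRel U ⊥) ε ↔ ConnectedState S s t ε := by
  refine forall₂_congr fun x _ => forall₂_congr fun y _ => eqvGen_iff_of_mutual ?_ ?_
  · rintro a b (hab | ⟨ha, hb, hr⟩)
    · exact EqvGen.rel _ _ (Or.inl hab)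
    · obtain rfl : a = b := congrArg Subtype.val hr
      exact EqvGen.refl a
  · exact fun a b hab => EqvGen.rel _ _ (hab.imp_right False.elim)

variable {EK EH : Type} {sK tK : EK → V} {sH tH : EH → V} {εK : EK → Bool} {εH : EH → Bool}

theorem edgeAdj_sumElim_iff {x y : V} :
    edgeAdj (Sum.elim sK sH) (Sum.elim tK tH) (Sum.elim εK εH) x y ↔
      edgeAdj sK tK εK x y ∨ edgeAdj sH tH εH x y := by
  simp only [edgeAdj, Sum.exists, Sum.elim_inl, Sum.elim_inr]

theorem mem_of_edgeAdj (hK : ∀ e, sK e ∈ U ∧ tK e ∈ U) {x y : V}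
    (h : edgeAdj sK tK εK x y) : x ∈ U ∧ y ∈ U := by
  obtain ⟨e, -, ⟨rfl, rfl⟩ | ⟨rfl, rfl⟩⟩ := h
  exacts [hK e, (hK e).symm]

theorem connectedState_sumElim_iff (hK : ∀ e, sK e ∈ U ∧ tK e ∈ U) :
    ConnectedState S (Sum.elim sK sH) (Sum.elim tK tH) (Sum.elim εK εH) ↔
      ConnectedModOn S sH tH (partRel U (inducedPart U sK tK εK)) εH := by
  refine forall₂_congr fun x _ => forall₂_congr fun y _ => eqvGen_iff_of_mutual ?_ ?_
  · rintro a b (hab | hab)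
    · rcases edgeAdj_sumElim_iff.mp hab with hK' | hH
      · obtain ⟨ha, hb⟩ := mem_of_edgeAdj hK hK'
        exact EqvGen.rel _ _ (Or.inr ⟨ha, hb, EqvGen.rel _ _ hK'⟩)
      · exact EqvGen.rel _ _ (Or.inl hH)
    · exact hab.elim
  · rintro a b (hH | ⟨_, _, hK'⟩)
    · exact EqvGen.rel _ _ (Or.inl (edgeAdj_sumElim_iff.mpr (Or.inr hH)))
    · exact Setoid.eqvGen_mono (fun _ _ h => Or.inl (edgeAdj_sumElim_iff.mpr (Or.inl h))) hK'

end Connectivity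

section ConnectivityMatrix

variable {U : Type} [Finite U] {β : Matrix (Setoid U) (Setoid U) ℝ}

theorem connMatrix_comm (γ γ' : Setoid U) : connMatrix U γ γ' = connMatrix U γ' γ := by
  simp only [connMatrix, sup_comm]

theorem apply_top_of_connMatrix_mul_eq_one (hβ : connMatrix U * β = 1) (γ' : Setoid U) :
    β ⊤ γ' = (1 : Matrix (Setoid U) (Setoid U) ℝ) ⊥ γ' := by
  rw [← hβ, Matrix.mul_apply, Finset.sum_eq_single ⊤]
  · simp [connMatrix]
  · intro γ _ hγ
    simp [connMatrix, hγ]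
  · simp

theorem sum_connMatrix_mul_mul_connMatrix (hβ : connMatrix U * β = 1) (P Q : Setoid U) :
    ∑ γ, ∑ γ', connMatrix U P γ * β γ γ' * connMatrix U γ' Q = connMatrix U P Q := by
  calc ∑ γ, ∑ γ', connMatrix U P γ * β γ γ' * connMatrix U γ' Q
      = (connMatrix U * β * connMatrix U) P Q := by
        simp only [Matrix.mul_apply, Finset.sum_mul]
        exact Finset.sum_comm
    _ = connMatrix U P Q := by rw [hβ, Matrix.one_mul]

end ConnectivityMatrix

section HybridIndicator

variable {V EK EH : Type} [Fintype V] {VK : Set V} {sK tK : EK → V} {sH tH : EH → V}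
  {β : Matrix (Setoid VK) (Setoid VK) ℝ}

theorem ite_connectedState_sumElim_eq (hU : VK.Nonempty) (hK : ∀ e, sK e ∈ VK ∧ tK e ∈ VK)
    (hβ : connMatrix VK * β = 1) (εK : EK → Bool) (εH : EH → Bool) :
    (if ConnectedState Set.univ (Sum.elim sK sH) (Sum.elim tK tH) (Sum.elim εK εH)
      then (1 : ℝ) else 0) =
      ∑ γ, ∑ γ', β γ γ' *
        (if ConnectedModOn VK sK tK (partRel VK γ) εK then 1 else 0) *
        (if ConnectedModOn Set.univ sH tH (partRel VK γ') εH then 1 else 0) := by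
  simp only [connectedState_sumElim_iff hK, connectedModOn_partRel_self_iff hU,
    connectedModOn_partRel_iff (Set.subset_univ VK) hU]
  by_cases hNI : NoIslands Set.univ VK sH tH εH
  · simp only [hNI, true_and]
    change connMatrix VK _ _ = ∑ γ, ∑ γ', β γ γ' * connMatrix VK _ γ * connMatrix VK _ γ'
    rw [connMatrix_comm, ← sum_connMatrix_mul_mul_connMatrix hβ]
    refine Finset.sum_congr rfl fun γ _ => Finset.sum_congr rfl fun γ' _ => ?_
    rw [connMatrix_comm γ']
    ring
  · simp [hNI]

end HybridIndicator

theorem sum_sum_ite_mul_eq_of_ite_eq {α β ι κ : Type} [Fintype α] [Fintype β] [Fintype ι]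
    [Fintype κ] {G : α → β → Prop} {A : ι → α → Prop} {B : κ → β → Prop} (c : ι → κ → ℝ)
    (μ : α → ℝ) (ν : β → ℝ)
    (h : ∀ a b, (if G a b then (1 : ℝ) else 0) =
      ∑ i, ∑ j, c i j * (if A i a then 1 else 0) * (if B j b then 1 else 0)) :
    ∑ a, ∑ b, (if G a b then μ a * ν b else 0) =
      ∑ i, ∑ j, c i j * (∑ a, if A i a then μ a else 0) * (∑ b, if B j b then ν b else 0) := by
  have hG : ∀ a b, (if G a b then μ a * ν b else 0) = μ a * ν b * (if G a b then 1 else 0) := by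
    intro a b; split_ifs <;> ring
  simp only [hG, h, Finset.mul_sum, Finset.sum_mul]
  -- bring both sides to the order `∑ i, ∑ j, ∑ a, ∑ b`
  simp only [Finset.sum_comm (s := (Finset.univ : Finset β)) (t := (Finset.univ : Finset ι)),
    Finset.sum_comm (s := (Finset.univ : Finset β)) (t := (Finset.univ : Finset κ)),
    Finset.sum_comm (s := (Finset.univ : Finset α)) (t := (Finset.univ : Finset ι)),
    Finset.sum_comm (s := (Finset.univ : Finset α)) (t := (Finset.univ : Finset κ)),
    Finset.sum_comm (s := (Finset.univ : Finset β)) (t := (Finset.univ : Finset α))]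
  refine Finset.sum_congr rfl fun i _ => Finset.sum_congr rfl fun j _ =>
    Finset.sum_congr rfl fun a _ => Finset.sum_congr rfl fun b _ => ?_
  split_ifs <;> ring

def stAmp {E : Type} [Fintype E] (p : E → ℝ) (ε : E → Bool) : ℂ :=
  ∏ e, if ε e then (Real.sqrt (p e) : ℂ) else (Real.sqrt (1 - p e) : ℂ)

theorem normSq_stAmp {E : Type} [Fintype E] {p : E → ℝ} (hp : ∀ e, p e ∈ Set.Icc (0 : ℝ) 1)
    (ε : E → Bool) : Complex.normSq (stAmp p ε) = stProb p ε := by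
  rw [stAmp, stProb, map_prod]
  refine Finset.prod_congr rfl fun e _ => ?_
  obtain ⟨h0, h1⟩ := hp e
  split_ifs
  · rw [Complex.normSq_ofReal, Real.mul_self_sqrt h0]
  · rw [Complex.normSq_ofReal, Real.mul_self_sqrt (sub_nonneg.2 h1)]

theorem normSq_vtens {A B : Type} (ψ₁ : A → ℂ) (ψ₂ : B → ℂ) (q : A × B) :
    Complex.normSq (vtens ψ₁ ψ₂ q) = Complex.normSq (ψ₁ q.1) * Complex.normSq (ψ₂ q.2) :=
  map_mul _ _ _

theorem qdot_projC_self {Λ : Type} [Fintype Λ] (C : Set Λ) (x : Λ → ℂ) :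
    qdot x (projC C x) = ((∑ ε, if ε ∈ C then Complex.normSq (x ε) else 0 : ℝ) : ℂ) := by
  rw [qdot, Complex.ofReal_sum]
  refine Finset.sum_congr rfl fun ε _ => ?_
  by_cases h : ε ∈ C <;> simp [projC, h, Complex.normSq_eq_conj_mul_self]

theorem projC_eq_self {Λ : Type} [Fintype Λ] {C : Set Λ} (hC : ∀ ε, ε ∈ C) (x : Λ → ℂ) :
    projC C x = x :=
  funext fun ε => if_pos (hC ε)

theorem hybrid_splitting {V EK EH : Type} [Fintype V] [Fintype EK] [Fintype EH]
    {VK : Set V} (hU : VK.Nonempty) {sK tK : EK → V} (hK : ∀ e, sK e ∈ VK ∧ tK e ∈ VK)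
    (sH tH : EH → V) {β : Matrix (Setoid VK) (Setoid VK) ℝ} (hβ : connMatrix VK * β = 1)
    (ψK : (EK → Bool) → ℂ) {p : EH → ℝ} (hp : ∀ e, p e ∈ Set.Icc (0 : ℝ) 1) :
    qdot (vtens ψK (stAmp p))
      (projC {εp : (EK → Bool) × (EH → Bool) |
          ConnectedState Set.univ (Sum.elim sK sH) (Sum.elim tK tH) (Sum.elim εp.1 εp.2)}
        (vtens ψK (stAmp p))) =
      ∑ γ, ∑ γ', (β γ γ' : ℂ) *
        qdot ψK (projC {ε | ConnectedModOn VK sK tK (partRel VK γ) ε} ψK) *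
        (relOf p (ConnectedModOn Set.univ sH tH (partRel VK γ')) : ℂ) := by
  simp only [qdot_projC_self, relOf, ← Complex.ofReal_mul, ← Complex.ofReal_sum]
  congr 1
  rw [Fintype.sum_prod_type]
  simp only [Set.mem_ofPred_eq, normSq_vtens, normSq_stAmp hp]
  exact sum_sum_ite_mul_eq_of_ite_eq _ _ _ (ite_connectedState_sumElim_eq hU hK hβ)

/-- quantum sublayer correction formula.  For a classical network
`H` (spanning all vertices) with a quantum sublayer `K` on the vertex set `VK`,
the quantum reliability of the hybrid network equals the classical reliability of
`H` plus the quantum corrections indexed by the non-trivial partitions `γ ≠ t`. -/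
theorem quantum_sublayer_correction {V EK EH : Type}
    [Fintype V] [Fintype EK] [Fintype EH]
    (VK : Set V) (hU : VK.Nonempty)
    (sK tK : EK → V) (hK : ∀ e, sK e ∈ VK ∧ tK e ∈ VK)
    (sH tH : EH → V)
    (β : Matrix (Setoid ↥VK) (Setoid ↥VK) ℝ)
    (hβ : β * connMatrix ↥VK = 1 ∧ connMatrix ↥VK * β = 1)
    (ψK : (EK → Bool) → ℂ) (hψK : qdot ψK ψK = 1)
    (p : EH → ℝ) (hp : ∀ e, p e ∈ Set.Icc (0:ℝ) 1) :
    qdot (vtens ψK (fun εH : EH → Bool =>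
        ∏ e, if εH e then (Real.sqrt (p e) : ℂ) else (Real.sqrt (1 - p e) : ℂ)))
      (projC {εp : (EK → Bool) × (EH → Bool) |
          ConnectedState Set.univ (Sum.elim sK sH) (Sum.elim tK tH)
            (Sum.elim εp.1 εp.2)}
        (vtens ψK (fun εH : EH → Bool =>
          ∏ e, if εH e then (Real.sqrt (p e) : ℂ) else (Real.sqrt (1 - p e) : ℂ))))
      = (relOf p (ConnectedState Set.univ sH tH) : ℂ)
        + ∑ γ ∈ Finset.univ.filter (fun γ : Setoid ↥VK => γ ≠ ⊤),
            ∑ γ' : Setoid ↥VK,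
              (β γ γ' : ℂ) *
                qdot ψK (projC {ε : EK → Bool |
                    ConnectedModOn VK sK tK (partRel VK γ) ε} ψK) *
                (relOf p (ConnectedModOn Set.univ sH tH (partRel VK γ')) : ℂ) := by
  refine (hybrid_splitting hU hK sH tH hβ.2 ψK hp).trans ?_
  rw [Finset.filter_ne', ← Finset.add_sum_erase _ _ (Finset.mem_univ ⊤)]
  congr 1
  have hQR_top : qdot ψK (projC {ε | ConnectedModOn VK sK tK (partRel VK ⊤) ε} ψK) = 1 := by
    rw [projC_eq_self (C := {ε | ConnectedModOn VK sK tK (partRel VK ⊤) ε})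
      fun _ => connectedModOn_partRel_top, hψK]
  have hR_bot : relOf p (ConnectedModOn Set.univ sH tH (partRel VK ⊥)) =
      relOf p (ConnectedState Set.univ sH tH) := by
    simp only [relOf, connectedModOn_partRel_bot_iff]
  simp [apply_top_of_connMatrix_mul_eq_one hβ.2, hQR_top, Matrix.one_apply, apply_ite, hR_bot]
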